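/- For all real k ≥ 0 and m with m ≥ 1, m > k and m > k^2, one has (1 + k/m)^m ≤ (1 − k/m)^{−m} ≤ (1 + k/m)^m · (1 − k^2/m)^{−1}. -/
import Mathlib


/-- For all real `k ≥ 0` and `m` with `m ≥ 1`, `m > k` and `m > k²`,
`(1 + k/m)^m ≤ (1 - k/m)^{-m} ≤ (1 + k/m)^m (1 - k²/m)⁻¹` (real powers). -/
theorem stmt16 (k m : ℝ) (hk : 0 ≤ k) (hm1 : 1 ≤ m) (hmk : k < m) (hmk2 : k ^ 2 < m) :
    (1 + k / m) ^ m ≤ (1 - k / m) ^ (-m) ∧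
      (1 - k / m) ^ (-m) ≤ (1 + k / m) ^ m * (1 - k ^ 2 / m)⁻¹ := by
  have hm0 : (0:ℝ) < m := lt_of_lt_of_le one_pos hm1
  have hkm1 : k / m < 1 := (div_lt_one hm0).mpr hmk
  have hb : 0 < 1 - k / m := by linarith
  have ha : (0:ℝ) < 1 + k / m := by positivity
  have hab : (1 + k / m) * (1 - k / m) = 1 - (k / m) ^ 2 := by ring
  have hsq : (k / m) ^ 2 ≤ 1 := by
    have := sq_nonneg (k/m); nlinarith [div_nonneg hk hm0.le]
  have hprod : (1 + k / m) ^ m * (1 - k / m) ^ m = (1 - (k / m) ^ 2) ^ m := by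
    rw [← Real.mul_rpow ha.le hb.le, hab]
  have hbm : 0 < (1 - k / m) ^ m := Real.rpow_pos_of_pos hb m
  have hneg : (1 - k / m) ^ (-m) = ((1 - k / m) ^ m)⁻¹ := Real.rpow_neg hb.le m
  have hbern : 1 - k ^ 2 / m ≤ (1 - (k / m) ^ 2) ^ m := by
    have h := one_add_mul_self_le_rpow_one_add (s := -(k/m)^2) (by linarith) (p := m) hm1
    have hmm : 1 + m * (-(k/m)^2) = 1 - k^2/m := by
      field_simp; ring
    have hmm2 : 1 + -(k/m)^2 = 1 - (k/m)^2 := by ring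
    rw [hmm, hmm2] at h
    exact h
  have hk2m : 0 < 1 - k ^ 2 / m := by
    rw [sub_pos, div_lt_one hm0]; exact hmk2
  constructor
  · have hle1 : (1 + k / m) ^ m * (1 - k / m) ^ m ≤ 1 := by
      rw [hprod]
      exact Real.rpow_le_one (by nlinarith) (by nlinarith [sq_nonneg (k/m)]) hm0.le
    rw [hneg, ← one_div, le_div_iff₀ hbm]
    exact hle1
  · rw [hneg]
    rw [inv_le_iff_one_le_mul₀ hbm]
    calc (1:ℝ) = (1 - k^2/m) * (1 - k^2/m)⁻¹ := (mul_inv_cancel₀ hk2m.ne').symm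
    _ ≤ (1 - (k/m)^2) ^ m * (1 - k^2/m)⁻¹ := by
        gcongr
    _ = (1 + k / m) ^ m * (1 - k ^ 2 / m)⁻¹ * (1 - k / m) ^ m := by
        rw [← hprod]; ring
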